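/- Let (p,w) ∈ W and suppose the family ((λ_s, p_s, w_s, a_s)) indexed by s ∈ S is feasible at (p,w) and attains the supremum defining T(V*)(p,w). Then for every s ∈ S with λ_s > 0, one has (1−δ)·v(a_s, p_s) + δ·V*(p_s, w_s) = V*(p_s, (1−δ)·u(a_s, p_s) + δ·w_s). -/
import Mathlib
set_option linter.unusedSectionVars false
set_option linter.unusedVariables false
set_option maxHeartbeats 1000000


noncomputable section
open scoped Classical

/-- Expected payoff of action `a` at belief `p` (= probability of state `ω₁`, encoded `true`). -/
def euP {A : Type*} (u : A → Bool → ℝ) (a : A) (p : ℝ) : ℝ :=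
  (1 - p) * u a false + p * u a true

/-- The agent's best static payoff `m(p)` at belief `p`. -/
def mFun {A : Type*} [Fintype A] [Nonempty A] (u : A → Bool → ℝ) (p : ℝ) : ℝ :=
  Finset.univ.sup' Finset.univ_nonempty (fun a => euP u a p)

/-- The agent's full-information payoff `M(p)` at belief `p`. -/
def MFun {A : Type*} [Fintype A] [Nonempty A] (u : A → Bool → ℝ) (p : ℝ) : ℝ :=
  (1 - p) * Finset.univ.sup' Finset.univ_nonempty (fun a => u a false)
    + p * Finset.univ.sup' Finset.univ_nonempty (fun a => u a true)

/-- The set `W` of pairs (belief, promised utility). -/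
def Wset {A : Type*} [Fintype A] [Nonempty A] (u : A → Bool → ℝ) : Set (ℝ × ℝ) :=
  {pw | pw.1 ∈ Set.Icc (0 : ℝ) 1 ∧ mFun u pw.1 ≤ pw.2 ∧ pw.2 ≤ MFun u pw.1}

/-- A family: for each signal a probability, a posterior belief, a promised continuation
utility, and a recommended action. -/
structure Fam (A S : Type*) where
  prob : S → ℝ
  belief : S → ℝ
  promise : S → ℝ
  act : S → A

/-- Feasibility of the family `f` at the point `pw = (p, w) ∈ W`. -/
def Feasible {A S : Type*} [Fintype A] [Nonempty A] [Fintype S]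
    (u : A → Bool → ℝ) (δ : ℝ) (pw : ℝ × ℝ) (f : Fam A S) : Prop :=
  (∀ s, f.prob s ∈ Set.Icc (0 : ℝ) 1) ∧
  (∀ s, (f.belief s, f.promise s) ∈ Wset u) ∧
  (∀ s, (1 - δ) * euP u (f.act s) (f.belief s) + δ * f.promise s ≥ mFun u (f.belief s)) ∧
  (∑ s, f.prob s * ((1 - δ) * euP u (f.act s) (f.belief s) + δ * f.promise s) ≥ pw.2) ∧
  (∑ s, f.prob s * f.belief s = pw.1) ∧
  (∑ s, f.prob s = 1)

/-- The principal's payoff from the family `f`, given continuation value function `V`. -/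
def famPayoff {A S : Type*} [Fintype S] (v : A → Bool → ℝ) (δ : ℝ) (V : ℝ × ℝ → ℝ)
    (f : Fam A S) : ℝ :=
  ∑ s, f.prob s * ((1 - δ) * euP v (f.act s) (f.belief s) + δ * V (f.belief s, f.promise s))

/-- The Bellman operator `T`. -/
def bellman {A S : Type*} [Fintype A] [Nonempty A] [Fintype S]
    (u v : A → Bool → ℝ) (δ : ℝ) (V : ℝ × ℝ → ℝ) (pw : ℝ × ℝ) : ℝ :=
  sSup {x | ∃ f : Fam A S, Feasible u δ pw f ∧ x = famPayoff v δ V f}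

/-- `V` is bounded on `W`. -/
def BddOnW {A : Type*} [Fintype A] [Nonempty A] (u : A → Bool → ℝ) (V : ℝ × ℝ → ℝ) : Prop :=
  ∃ C : ℝ, ∀ pw ∈ Wset u, |V pw| ≤ C


section Basics
variable {A : Type*} [Fintype A] [Nonempty A] (u : A → Bool → ℝ)
lemma affineP_sum {I : Type*} (t : Finset I) (w q : I → ℝ) (hw : ∑ i ∈ t, w i = 1)
    (c0 c1 : ℝ) :
    (1 - ∑ i ∈ t, w i * q i) * c0 + (∑ i ∈ t, w i * q i) * c1
      = ∑ i ∈ t, w i * ((1 - q i) * c0 + q i * c1) := by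
  have h : ∀ i ∈ t, w i * ((1 - q i) * c0 + q i * c1)
      = w i * c0 - (w i * q i) * c0 + (w i * q i) * c1 := by
    intro i _; ring
  rw [Finset.sum_congr rfl h, Finset.sum_add_distrib, Finset.sum_sub_distrib,
    ← Finset.sum_mul, ← Finset.sum_mul, ← Finset.sum_mul, hw]
  ring
lemma euP_sum {I : Type*} (t : Finset I) (w q : I → ℝ) (hw : ∑ i ∈ t, w i = 1) (a : A) :
    euP u a (∑ i ∈ t, w i * q i) = ∑ i ∈ t, w i * euP u a (q i) := by
  simpa [euP] using affineP_sum t w q hw (u a false) (u a true)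
lemma MFun_sum {I : Type*} (t : Finset I) (w q : I → ℝ) (hw : ∑ i ∈ t, w i = 1) :
    MFun u (∑ i ∈ t, w i * q i) = ∑ i ∈ t, w i * MFun u (q i) := by
  simpa [MFun] using affineP_sum t w q hw
    (Finset.univ.sup' Finset.univ_nonempty (fun a => u a false))
    (Finset.univ.sup' Finset.univ_nonempty (fun a => u a true))
lemma euP_le_mFun (a : A) (p : ℝ) : euP u a p ≤ mFun u p := by
  unfold mFun; exact Finset.le_sup' (fun a => euP u a p) (Finset.mem_univ a)
lemma exists_amax (p : ℝ) : ∃ a : A, euP u a p = mFun u p := by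
  obtain ⟨a, _, ha⟩ := Finset.exists_mem_eq_sup' (Finset.univ_nonempty (α := A))
    (fun a => euP u a p)
  exact ⟨a, ha.symm⟩
lemma mFun_le_MFun {p : ℝ} (hp : p ∈ Set.Icc (0:ℝ) 1) : mFun u p ≤ MFun u p := by
  obtain ⟨a, ha⟩ := exists_amax u p
  rw [← ha, euP, MFun]
  have h0 : u a false ≤ Finset.univ.sup' Finset.univ_nonempty (fun a => u a false) :=
    Finset.le_sup' (fun a => u a false) (Finset.mem_univ a)
  have h1 : u a true ≤ Finset.univ.sup' Finset.univ_nonempty (fun a => u a true) :=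
    Finset.le_sup' (fun a => u a true) (Finset.mem_univ a)
  have := hp.1; have := hp.2
  nlinarith
lemma mFun_sum_le {I : Type*} (t : Finset I) (w q : I → ℝ) (hw : ∑ i ∈ t, w i = 1)
    (hw0 : ∀ i ∈ t, 0 ≤ w i) :
    mFun u (∑ i ∈ t, w i * q i) ≤ ∑ i ∈ t, w i * mFun u (q i) := by
  obtain ⟨a, ha⟩ := exists_amax u (∑ i ∈ t, w i * q i)
  rw [← ha, euP_sum u t w q hw]
  exact Finset.sum_le_sum fun i hi =>
    mul_le_mul_of_nonneg_left (euP_le_mFun u (a := a) (q i)) (hw0 i hi)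
lemma Wset_sum_mem {I : Type*} (t : Finset I) (w q x : I → ℝ) (hw : ∑ i ∈ t, w i = 1)
    (hw0 : ∀ i ∈ t, 0 ≤ w i) (hmem : ∀ i ∈ t, (q i, x i) ∈ Wset u) :
    (∑ i ∈ t, w i * q i, ∑ i ∈ t, w i * x i) ∈ Wset u := by
  refine ⟨⟨?_, ?_⟩, ?_, ?_⟩
  · exact Finset.sum_nonneg fun i hi => mul_nonneg (hw0 i hi) (hmem i hi).1.1
  · calc ∑ i ∈ t, w i * q i ≤ ∑ i ∈ t, w i * 1 :=
        Finset.sum_le_sum fun i hi => mul_le_mul_of_nonneg_left (hmem i hi).1.2 (hw0 i hi)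
      _ = 1 := by simpa using hw
  · refine le_trans (mFun_sum_le u t w q hw hw0) (Finset.sum_le_sum fun i hi => ?_)
    exact mul_le_mul_of_nonneg_left (hmem i hi).2.1 (hw0 i hi)
  · rw [MFun_sum u t w q hw]
    exact Finset.sum_le_sum fun i hi =>
      mul_le_mul_of_nonneg_left (hmem i hi).2.2 (hw0 i hi)
end Basics

/-- THE MERGING LEMMA: any generalized (arbitrary finite index) feasible family can be
replaced by an `S`-indexed feasible family with at least the same payoff, provided `V`
is concave on `W`. -/
lemma merge_family {A S I : Type*} [Fintype A] [Nonempty A] [Fintype S] [Fintype I]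
    (u v : A → Bool → ℝ) (δ : ℝ) (hδ0 : 0 ≤ δ) (hδ1 : δ ≤ 1)
    (hAS : Fintype.card A ≤ Fintype.card S)
    (V : ℝ × ℝ → ℝ) (hV : ConcaveOn ℝ (Wset u) V)
    (pw : ℝ × ℝ) (hpw : pw ∈ Wset u)
    (lam q x : I → ℝ) (b : I → A)
    (h0 : ∀ i, 0 ≤ lam i)
    (hW : ∀ i, (q i, x i) ∈ Wset u)
    (hIC : ∀ i, (1 - δ) * euP u (b i) (q i) + δ * x i ≥ mFun u (q i))
    (hPK : ∑ i, lam i * ((1 - δ) * euP u (b i) (q i) + δ * x i) ≥ pw.2)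
    (hB : ∑ i, lam i * q i = pw.1)
    (hT : ∑ i, lam i = 1) :
    ∃ h : Fam A S, Feasible u δ pw h ∧
      ∑ i, lam i * ((1 - δ) * euP v (b i) (q i) + δ * V (q i, x i))
        ≤ famPayoff v δ V h := by
  classical
  obtain ⟨ι⟩ := Function.Embedding.nonempty_of_card_le hAS
  obtain ⟨a0, ha0⟩ := exists_amax u pw.1
  set fib : A → Finset I := fun a => Finset.univ.filter (fun i => b i = a) with hfib
  set Λ : A → ℝ := fun a => ∑ i ∈ fib a, lam i with hΛdef
  set Qa : A → ℝ := fun a =>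
    if Λ a = 0 then pw.1 else (∑ i ∈ fib a, lam i * q i) / Λ a with hQadef
  set Xa : A → ℝ := fun a =>
    if Λ a = 0 then pw.2 else (∑ i ∈ fib a, lam i * x i) / Λ a with hXadef
  set Aa : A → A := fun a => if Λ a = 0 then a0 else a with hAadef
  set h : Fam A S :=
    { prob := fun s => if hs : ∃ a, ι a = s then Λ hs.choose else 0
      belief := fun s => if hs : ∃ a, ι a = s then Qa hs.choose else pw.1
      promise := fun s => if hs : ∃ a, ι a = s then Xa hs.choose else pw.2
      act := fun s => if hs : ∃ a, ι a = s then Aa hs.choose else a0 } with hh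
  have hinv : ∀ (a : A) (hs : ∃ a', ι a' = ι a), hs.choose = a :=
    fun a hs => ι.injective hs.choose_spec
  have hprob : ∀ a, h.prob (ι a) = Λ a := by
    intro a
    show (if hs : ∃ a', ι a' = ι a then Λ hs.choose else 0) = Λ a
    rw [dif_pos ⟨a, rfl⟩, hinv a ⟨a, rfl⟩]
  have hbel : ∀ a, h.belief (ι a) = Qa a := by
    intro a
    show (if hs : ∃ a', ι a' = ι a then Qa hs.choose else pw.1) = Qa a
    rw [dif_pos ⟨a, rfl⟩, hinv a ⟨a, rfl⟩]
  have hprom : ∀ a, h.promise (ι a) = Xa a := by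
    intro a
    show (if hs : ∃ a', ι a' = ι a then Xa hs.choose else pw.2) = Xa a
    rw [dif_pos ⟨a, rfl⟩, hinv a ⟨a, rfl⟩]
  have hact : ∀ a, h.act (ι a) = Aa a := by
    intro a
    show (if hs : ∃ a', ι a' = ι a then Aa hs.choose else a0) = Aa a
    rw [dif_pos ⟨a, rfl⟩, hinv a ⟨a, rfl⟩]
  have hprob0 : ∀ s, (¬ ∃ a, ι a = s) → h.prob s = 0 := by
    intro s hs
    show (if hs : ∃ a, ι a = s then Λ hs.choose else 0) = 0
    rw [dif_neg hs]
  -- key reindexing lemma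
  have hkey : ∀ G : S → ℝ, (∀ s, (¬ ∃ a, ι a = s) → G s = 0) →
      ∑ s, G s = ∑ a, G (ι a) := by
    intro G hG
    have h1 : ∑ s ∈ Finset.univ.image ι, G s = ∑ s, G s := by
      refine Finset.sum_subset (Finset.subset_univ _) (fun s _ hs => hG s ?_)
      rintro ⟨a, ha⟩
      exact hs (Finset.mem_image.2 ⟨a, Finset.mem_univ a, ha⟩)
    rw [← h1, Finset.sum_image (fun a _ a' _ haa => ι.injective haa)]
  -- fiber facts
  have hΛ0 : ∀ a, 0 ≤ Λ a := fun a => Finset.sum_nonneg fun i _ => h0 i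
  have hΛ1 : ∀ a, Λ a ≤ 1 := by
    intro a
    rw [← hT]
    exact Finset.sum_le_sum_of_subset_of_nonneg (Finset.filter_subset _ _)
      (fun i _ _ => h0 i)
  have hzero : ∀ a, Λ a = 0 → ∀ i ∈ fib a, lam i = 0 := by
    intro a ha
    exact (Finset.sum_eq_zero_iff_of_nonneg (fun i _ => h0 i)).1 ha
  have hfibmem : ∀ a, ∀ i ∈ fib a, b i = a := by
    intro a i hi
    exact (Finset.mem_filter.1 hi).2
  -- the total sums over I split fiberwise
  have hsplit : ∀ f : I → ℝ, ∑ a, ∑ i ∈ fib a, f i = ∑ i, f i := by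
    intro f
    exact Finset.sum_fiberwise Finset.univ b f
  -- weight facts in the nonzero case
  have Hw : ∀ a, Λ a ≠ 0 →
      (∑ i ∈ fib a, lam i / Λ a = 1) ∧ (∀ i ∈ fib a, 0 ≤ lam i / Λ a) := by
    intro a ha
    constructor
    · rw [← Finset.sum_div]; exact div_self ha
    · intro i _; exact div_nonneg (h0 i) (hΛ0 a)
  have hQx : ∀ a, Λ a ≠ 0 → Qa a = ∑ i ∈ fib a, (lam i / Λ a) * q i := by
    intro a ha
    rw [hQadef]
    simp only [if_neg ha]
    rw [Finset.sum_div]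
    exact Finset.sum_congr rfl fun i _ => by ring
  have hXx : ∀ a, Λ a ≠ 0 → Xa a = ∑ i ∈ fib a, (lam i / Λ a) * x i := by
    intro a ha
    rw [hXadef]
    simp only [if_neg ha]
    rw [Finset.sum_div]
    exact Finset.sum_congr rfl fun i _ => by ring
  have hmul : ∀ a, Λ a ≠ 0 → ∀ f : I → ℝ,
      Λ a * ∑ i ∈ fib a, (lam i / Λ a) * f i = ∑ i ∈ fib a, lam i * f i := by
    intro a ha f
    rw [Finset.mul_sum]
    exact Finset.sum_congr rfl fun i _ => by field_simp
  have hlin : ∀ a, ∀ (c1 c2 : ℝ) (f g : I → ℝ),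
      c1 * ∑ i ∈ fib a, (lam i / Λ a) * f i + c2 * ∑ i ∈ fib a, (lam i / Λ a) * g i
        = ∑ i ∈ fib a, (lam i / Λ a) * (c1 * f i + c2 * g i) := by
    intro a c1 c2 f g
    rw [Finset.mul_sum, Finset.mul_sum, ← Finset.sum_add_distrib]
    exact Finset.sum_congr rfl fun i _ => by ring
  -- membership of merged points in W
  have hWa : ∀ a, (Qa a, Xa a) ∈ Wset u := by
    intro a
    by_cases ha : Λ a = 0
    · rw [hQadef, hXadef]; simp only [if_pos ha]; exact hpw
    · rw [hQx a ha, hXx a ha]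
      exact Wset_sum_mem u (fib a) _ q x (Hw a ha).1 (Hw a ha).2 (fun i _ => hW i)
  -- IC for merged branches
  have hICa : ∀ a, (1 - δ) * euP u (Aa a) (Qa a) + δ * Xa a ≥ mFun u (Qa a) := by
    intro a
    by_cases ha : Λ a = 0
    · rw [hQadef, hXadef, hAadef]; simp only [if_pos ha]
      have h1 : euP u a0 pw.1 = mFun u pw.1 := ha0
      have h2 : mFun u pw.1 ≤ pw.2 := hpw.2.1
      nlinarith
    · have hAa : Aa a = a := by rw [hAadef]; simp only [if_neg ha]
      rw [hAa, hQx a ha, hXx a ha, euP_sum u (fib a) _ q (Hw a ha).1 a,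
        hlin a (1 - δ) δ (fun i => euP u a (q i)) x]
      refine le_trans (mFun_sum_le u (fib a) _ q (Hw a ha).1 (Hw a ha).2) ?_
      refine Finset.sum_le_sum fun i hi => ?_
      refine mul_le_mul_of_nonneg_left ?_ ((Hw a ha).2 i hi)
      rw [← hfibmem a i hi]
      exact hIC i
  -- the merged ("fiberwise") representation of aggregate quantities
  have hAgg : ∀ (c1 c2 : ℝ) (F : A → ℝ → ℝ) ,
      (∀ (a : A) (t : Finset I) (w qq : I → ℝ), ∑ i ∈ t, w i = 1 →
        F a (∑ i ∈ t, w i * qq i) = ∑ i ∈ t, w i * F a (qq i)) →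
      ∑ a, Λ a * (c1 * F (Aa a) (Qa a) + c2 * Xa a)
        = ∑ i, lam i * (c1 * F (b i) (q i) + c2 * x i) := by
    intro c1 c2 F hF
    rw [← hsplit (fun i => lam i * (c1 * F (b i) (q i) + c2 * x i))]
    refine Finset.sum_congr rfl fun a _ => ?_
    by_cases ha : Λ a = 0
    · rw [ha, zero_mul]
      refine (Finset.sum_eq_zero fun i hi => ?_).symm
      rw [hzero a ha i hi, zero_mul]
    · have hAa : Aa a = a := by rw [hAadef]; simp only [if_neg ha]
      rw [hAa, hQx a ha, hXx a ha, hF a (fib a) _ q (Hw a ha).1,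
        hlin a c1 c2 (fun i => F a (q i)) x, hmul a ha]
      refine Finset.sum_congr rfl fun i hi => ?_
      rw [hfibmem a i hi]
  -- Feasibility of h
  have hfeas : Feasible u δ pw h := by
    refine ⟨?_, ?_, ?_, ?_, ?_, ?_⟩
    · -- prob in [0,1]
      intro s
      by_cases hs : ∃ a, ι a = s
      · obtain ⟨a, rfl⟩ := hs
        rw [hprob a]
        exact ⟨hΛ0 a, hΛ1 a⟩
      · rw [hprob0 s hs]
        exact ⟨le_refl 0, zero_le_one⟩
    · -- (belief, promise) ∈ W
      intro s
      by_cases hs : ∃ a, ι a = s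
      · obtain ⟨a, rfl⟩ := hs
        rw [hbel a, hprom a]
        exact hWa a
      · show ((if hs : ∃ a, ι a = s then Qa hs.choose else pw.1),
          (if hs : ∃ a, ι a = s then Xa hs.choose else pw.2)) ∈ Wset u
        rw [dif_neg hs, dif_neg hs]
        exact hpw
    · -- IC
      intro s
      by_cases hs : ∃ a, ι a = s
      · obtain ⟨a, rfl⟩ := hs
        rw [hbel a, hprom a, hact a]
        exact hICa a
      · show (1 - δ) * euP u (if hs : ∃ a, ι a = s then Aa hs.choose else a0)
            (if hs : ∃ a, ι a = s then Qa hs.choose else pw.1)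
            + δ * (if hs : ∃ a, ι a = s then Xa hs.choose else pw.2)
            ≥ mFun u (if hs : ∃ a, ι a = s then Qa hs.choose else pw.1)
        rw [dif_neg hs, dif_neg hs, dif_neg hs]
        have h1 : euP u a0 pw.1 = mFun u pw.1 := ha0
        have h2 : mFun u pw.1 ≤ pw.2 := hpw.2.1
        nlinarith
    · -- aggregate promise keeping
      have hre : ∑ s, h.prob s * ((1 - δ) * euP u (h.act s) (h.belief s) + δ * h.promise s)
          = ∑ a, Λ a * ((1 - δ) * euP u (Aa a) (Qa a) + δ * Xa a) := by
        rw [hkey _ (fun s hs => by rw [hprob0 s hs, zero_mul])]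
        exact Finset.sum_congr rfl fun a _ => by rw [hprob a, hbel a, hprom a, hact a]
      rw [hre, hAgg (1 - δ) δ (fun a p => euP u a p) (fun a t w qq hw => euP_sum u t w qq hw a)]
      exact hPK
    · -- mean belief
      have hre : ∑ s, h.prob s * h.belief s = ∑ a, Λ a * Qa a := by
        rw [hkey _ (fun s hs => by rw [hprob0 s hs, zero_mul])]
        exact Finset.sum_congr rfl fun a _ => by rw [hprob a, hbel a]
      rw [hre, ← hB, ← hsplit (fun i => lam i * q i)]
      refine Finset.sum_congr rfl fun a _ => ?_
      by_cases ha : Λ a = 0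
      · rw [ha, zero_mul]
        refine (Finset.sum_eq_zero fun i hi => ?_).symm
        rw [hzero a ha i hi, zero_mul]
      · rw [hQx a ha, hmul a ha]
    · -- total probability
      have hre : ∑ s, h.prob s = ∑ a, Λ a := by
        rw [hkey _ (fun s hs => hprob0 s hs)]
        exact Finset.sum_congr rfl fun a _ => hprob a
      rw [hre, ← hT, ← hsplit lam]
  -- payoff comparison
  refine ⟨h, hfeas, ?_⟩
  have hre : famPayoff v δ V h
      = ∑ a, Λ a * ((1 - δ) * euP v (Aa a) (Qa a) + δ * V (Qa a, Xa a)) := by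
    unfold famPayoff
    rw [hkey _ (fun s hs => by rw [hprob0 s hs, zero_mul])]
    exact Finset.sum_congr rfl fun a _ => by rw [hprob a, hbel a, hprom a, hact a]
  rw [hre, ← hsplit (fun i => lam i * ((1 - δ) * euP v (b i) (q i) + δ * V (q i, x i)))]
  refine Finset.sum_le_sum fun a _ => ?_
  by_cases ha : Λ a = 0
  · rw [ha, zero_mul]
    refine le_of_eq (Finset.sum_eq_zero fun i hi => ?_)
    rw [hzero a ha i hi, zero_mul]
  · have hAa : Aa a = a := by rw [hAadef]; simp only [if_neg ha]
    -- Jensen for V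
    have hpt : ∑ i ∈ fib a, (lam i / Λ a) • ((q i, x i) : ℝ × ℝ) = (Qa a, Xa a) := by
      rw [hQx a ha, hXx a ha, Prod.ext_iff]
      constructor
      · rw [Prod.fst_sum]
        exact Finset.sum_congr rfl fun i _ => rfl
      · rw [Prod.snd_sum]
        exact Finset.sum_congr rfl fun i _ => rfl
    have hjen : ∑ i ∈ fib a, (lam i / Λ a) * V (q i, x i) ≤ V (Qa a, Xa a) := by
      have := hV.le_map_sum (Hw a ha).2 (Hw a ha).1 (fun i _ => hW i)
      rw [hpt] at this
      simpa [smul_eq_mul] using this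
    have hbi : ∑ i ∈ fib a, (lam i / Λ a) * ((1 - δ) * euP v (b i) (q i) + δ * V (q i, x i))
        = (1 - δ) * (∑ i ∈ fib a, (lam i / Λ a) * euP v a (q i))
          + δ * (∑ i ∈ fib a, (lam i / Λ a) * V (q i, x i)) := by
      rw [hlin a (1 - δ) δ (fun i => euP v a (q i)) (fun i => V (q i, x i))]
      exact Finset.sum_congr rfl fun i hi => by rw [hfibmem a i hi]
    have heq : euP v a (Qa a) = ∑ i ∈ fib a, (lam i / Λ a) * euP v a (q i) := by
      rw [hQx a ha]; exact euP_sum v (fib a) _ q (Hw a ha).1 a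
    have hδv : δ * (∑ i ∈ fib a, (lam i / Λ a) * V (q i, x i)) ≤ δ * V (Qa a, Xa a) :=
      mul_le_mul_of_nonneg_left hjen hδ0
    have hstep : ∑ i ∈ fib a, (lam i / Λ a) *
        ((1 - δ) * euP v (b i) (q i) + δ * V (q i, x i))
        ≤ (1 - δ) * euP v a (Qa a) + δ * V (Qa a, Xa a) := by
      rw [hbi, heq]; linarith
    calc ∑ i ∈ fib a, lam i * ((1 - δ) * euP v (b i) (q i) + δ * V (q i, x i))
        = Λ a * ∑ i ∈ fib a, (lam i / Λ a) *
            ((1 - δ) * euP v (b i) (q i) + δ * V (q i, x i)) := (hmul a ha _).symm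
      _ ≤ Λ a * ((1 - δ) * euP v (Aa a) (Qa a) + δ * V (Qa a, Xa a)) := by
          rw [hAa]; exact mul_le_mul_of_nonneg_left hstep (hΛ0 a)

section Machinery

variable {A S : Type*} [Fintype A] [Nonempty A] [Fintype S]

/-- the payoff set whose supremum is the Bellman operator. -/
def pSet (u v : A → Bool → ℝ) (δ : ℝ) (V : ℝ × ℝ → ℝ) (pw : ℝ × ℝ) : Set ℝ :=
  {x | ∃ f : Fam A S, Feasible u δ pw f ∧ x = famPayoff v δ V f}

lemma bellman_eq_sSup (u v : A → Bool → ℝ) (δ : ℝ) (V : ℝ × ℝ → ℝ) (pw : ℝ × ℝ) :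
    bellman (S := S) u v δ V pw = sSup (pSet (S := S) u v δ V pw) := rfl

/-- two-point sums -/
lemma two_sum {s0 s1 : S} (hne : s0 ≠ s1) (c d : ℝ) (g : S → ℝ) :
    ∑ t, (if t = s0 then c else if t = s1 then d else 0) * g t = c * g s0 + d * g s1 := by
  classical
  have h : ∀ t, (if t = s0 then c else if t = s1 then d else 0) * g t
      = (if t = s0 then c * g t else 0) + (if t = s1 then d * g t else 0) := by
    intro t
    by_cases h0 : t = s0
    · subst h0; rw [if_pos rfl, if_pos rfl, if_neg hne]; ring
    · rw [if_neg h0, if_neg h0]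
      by_cases h1 : t = s1
      · subst h1; rw [if_pos rfl, if_pos rfl]; ring
      · rw [if_neg h1, if_neg h1]; ring
  rw [Finset.sum_congr rfl (fun t _ => h t), Finset.sum_add_distrib,
    Finset.sum_ite_eq' Finset.univ s0 (fun t => c * g t),
    Finset.sum_ite_eq' Finset.univ s1 (fun t => d * g t),
    if_pos (Finset.mem_univ s0), if_pos (Finset.mem_univ s1)]

/-- there is a feasible family at every point of W : full disclosure. -/
lemma exists_feasible (u : A → Bool → ℝ) (δ : ℝ) (hδ0 : 0 ≤ δ) (hδ1 : δ ≤ 1)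
    (hS2 : 2 ≤ Fintype.card S) (pw : ℝ × ℝ) (hpw : pw ∈ Wset u) :
    ∃ f : Fam A S, Feasible u δ pw f := by
  classical
  obtain ⟨s0, s1, hne⟩ := Fintype.exists_pair_of_one_lt_card (by omega : 1 < Fintype.card S)
  obtain ⟨a0, ha0⟩ := exists_amax u 0
  obtain ⟨a1, ha1⟩ := exists_amax u 1
  set f : Fam A S :=
    { prob := fun t => if t = s0 then 1 - pw.1 else if t = s1 then pw.1 else 0
      belief := fun t => if t = s1 then 1 else 0
      promise := fun t => if t = s1 then mFun u 1 else mFun u 0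
      act := fun t => if t = s1 then a1 else a0 } with hf
  have hps : pw.1 ∈ Set.Icc (0:ℝ) 1 := hpw.1
  have hWb : ∀ t, (f.belief t, f.promise t) ∈ Wset u := by
    intro t
    show ((if t = s1 then (1:ℝ) else 0), (if t = s1 then mFun u 1 else mFun u 0)) ∈ Wset u
    by_cases h1 : t = s1
    · rw [if_pos h1, if_pos h1]
      exact ⟨⟨zero_le_one, le_refl 1⟩, le_refl _, mFun_le_MFun u ⟨zero_le_one, le_refl 1⟩⟩
    · rw [if_neg h1, if_neg h1]
      exact ⟨⟨le_refl 0, zero_le_one⟩, le_refl _, mFun_le_MFun u ⟨le_refl 0, zero_le_one⟩⟩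
  have hIC : ∀ t, (1 - δ) * euP u (f.act t) (f.belief t) + δ * f.promise t
      ≥ mFun u (f.belief t) := by
    intro t
    show (1 - δ) * euP u (if t = s1 then a1 else a0) (if t = s1 then (1:ℝ) else 0)
        + δ * (if t = s1 then mFun u 1 else mFun u 0) ≥ mFun u (if t = s1 then (1:ℝ) else 0)
    by_cases h1 : t = s1
    · rw [if_pos h1, if_pos h1, if_pos h1, ha1]; ring_nf; exact le_refl _
    · rw [if_neg h1, if_neg h1, if_neg h1, ha0]; ring_nf; exact le_refl _
  refine ⟨f, ?_, hWb, hIC, ?_, ?_, ?_⟩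
  · intro t
    show (if t = s0 then 1 - pw.1 else if t = s1 then pw.1 else 0) ∈ Set.Icc (0:ℝ) 1
    by_cases h0 : t = s0
    · rw [if_pos h0]; constructor <;> [linarith [hps.2]; linarith [hps.1]]
    · rw [if_neg h0]
      by_cases h1 : t = s1
      · rw [if_pos h1]; exact hps
      · rw [if_neg h1]; exact ⟨le_refl 0, zero_le_one⟩
  · -- aggregate promise keeping: equals MFun u pw.1
    have := two_sum hne (1 - pw.1) pw.1
      (fun t => (1 - δ) * euP u (f.act t) (f.belief t) + δ * f.promise t)
    show ∑ t, f.prob t * ((1 - δ) * euP u (f.act t) (f.belief t) + δ * f.promise t) ≥ pw.2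
    rw [this]
    have e0 : (1 - δ) * euP u (f.act s0) (f.belief s0) + δ * f.promise s0 = mFun u 0 := by
      show (1 - δ) * euP u (if s0 = s1 then a1 else a0) (if s0 = s1 then (1:ℝ) else 0)
          + δ * (if s0 = s1 then mFun u 1 else mFun u 0) = mFun u 0
      rw [if_neg hne, if_neg hne, if_neg hne, ha0]; ring
    have e1 : (1 - δ) * euP u (f.act s1) (f.belief s1) + δ * f.promise s1 = mFun u 1 := by
      show (1 - δ) * euP u (if s1 = s1 then a1 else a0) (if s1 = s1 then (1:ℝ) else 0)
          + δ * (if s1 = s1 then mFun u 1 else mFun u 0) = mFun u 1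
      rw [if_pos rfl, if_pos rfl, if_pos rfl, ha1]; ring
    rw [e0, e1]
    have hM : (1 - pw.1) * mFun u 0 + pw.1 * mFun u 1 = MFun u pw.1 := by
      have hm0 : mFun u 0 = Finset.univ.sup' Finset.univ_nonempty (fun a => u a false) := by
        unfold mFun
        exact Finset.sup'_congr _ rfl (fun a _ => by unfold euP; ring)
      have hm1 : mFun u 1 = Finset.univ.sup' Finset.univ_nonempty (fun a => u a true) := by
        unfold mFun
        exact Finset.sup'_congr _ rfl (fun a _ => by unfold euP; ring)
      rw [hm0, hm1]; unfold MFun; ring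
    rw [hM]
    exact hpw.2.2
  · have := two_sum hne (1 - pw.1) pw.1 f.belief
    show ∑ t, f.prob t * f.belief t = pw.1
    rw [this]
    show (1 - pw.1) * (if s0 = s1 then (1:ℝ) else 0) + pw.1 * (if s1 = s1 then (1:ℝ) else 0) = pw.1
    rw [if_neg hne, if_pos rfl]; ring
  · have := two_sum hne (1 - pw.1) pw.1 (fun _ => (1:ℝ))
    show ∑ t, f.prob t = 1
    calc ∑ t, f.prob t = ∑ t, f.prob t * (fun _ => (1:ℝ)) t := by
          exact Finset.sum_congr rfl fun t _ => by ring
      _ = (1 - pw.1) * 1 + pw.1 * 1 := this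
      _ = 1 := by ring

/-- bound on the one period principal payoff -/
def Kv (v : A → Bool → ℝ) : ℝ :=
  Finset.univ.sup' Finset.univ_nonempty (fun a => |v a false| + |v a true|)

lemma Kv_nonneg (v : A → Bool → ℝ) : 0 ≤ Kv v := by
  obtain ⟨a⟩ := (inferInstance : Nonempty A)
  refine le_trans (by positivity) (Finset.le_sup' (fun a => |v a false| + |v a true|)
    (Finset.mem_univ a))

lemma abs_euP_le (v : A → Bool → ℝ) (a : A) {p : ℝ} (hp : p ∈ Set.Icc (0:ℝ) 1) :
    |euP v a p| ≤ Kv v := by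
  have h : |euP v a p| ≤ |v a false| + |v a true| := by
    unfold euP
    refine le_trans (abs_add_le _ _) ?_
    rw [abs_mul, abs_mul]
    have h1 : |1 - p| = 1 - p := abs_of_nonneg (by linarith [hp.2])
    have h2 : |p| = p := abs_of_nonneg hp.1
    nlinarith [abs_nonneg (v a false), abs_nonneg (v a true), hp.1, hp.2]
  exact le_trans h (Finset.le_sup' (fun a => |v a false| + |v a true|) (Finset.mem_univ a))

lemma abs_famPayoff_le (u v : A → Bool → ℝ) (δ : ℝ) (hδ0 : 0 ≤ δ) (hδ1 : δ ≤ 1)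
    (V : ℝ × ℝ → ℝ) (C : ℝ) (hVC : ∀ z ∈ Wset u, |V z| ≤ C)
    (pw : ℝ × ℝ) (f : Fam A S) (hf : Feasible u δ pw f) :
    |famPayoff v δ V f| ≤ (1 - δ) * Kv v + δ * C := by
  obtain ⟨hp01, hWm, hIC, hPK, hB, hT⟩ := hf
  unfold famPayoff
  refine le_trans (Finset.abs_sum_le_sum_abs _ _) ?_
  have hterm : ∀ s, |f.prob s * ((1 - δ) * euP v (f.act s) (f.belief s)
      + δ * V (f.belief s, f.promise s))| ≤ f.prob s * ((1 - δ) * Kv v + δ * C) := by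
    intro s
    rw [abs_mul, abs_of_nonneg (hp01 s).1]
    refine mul_le_mul_of_nonneg_left ?_ (hp01 s).1
    refine le_trans (abs_add_le _ _) ?_
    rw [abs_mul, abs_mul, abs_of_nonneg (by linarith : (0:ℝ) ≤ 1 - δ), abs_of_nonneg hδ0]
    have h1 : |euP v (f.act s) (f.belief s)| ≤ Kv v := abs_euP_le v _ (hWm s).1
    have h2 : |V (f.belief s, f.promise s)| ≤ C := hVC _ (hWm s)
    nlinarith
  refine le_trans (Finset.sum_le_sum fun s _ => hterm s) ?_
  rw [← Finset.sum_mul, hT, one_mul]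

lemma pSet_nonempty (u v : A → Bool → ℝ) (δ : ℝ) (hδ0 : 0 ≤ δ) (hδ1 : δ ≤ 1)
    (hS2 : 2 ≤ Fintype.card S) (V : ℝ × ℝ → ℝ) (pw : ℝ × ℝ) (hpw : pw ∈ Wset u) :
    (pSet (S := S) u v δ V pw).Nonempty := by
  obtain ⟨f, hf⟩ := exists_feasible (S := S) u δ hδ0 hδ1 hS2 pw hpw
  exact ⟨famPayoff v δ V f, f, hf, rfl⟩

lemma pSet_bddAbove (u v : A → Bool → ℝ) (δ : ℝ) (hδ0 : 0 ≤ δ) (hδ1 : δ ≤ 1)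
    (V : ℝ × ℝ → ℝ) (C : ℝ) (hVC : ∀ z ∈ Wset u, |V z| ≤ C) (pw : ℝ × ℝ) :
    BddAbove (pSet (S := S) u v δ V pw) := by
  refine ⟨(1 - δ) * Kv v + δ * C, ?_⟩
  rintro x ⟨f, hf, rfl⟩
  exact le_trans (le_abs_self _) (abs_famPayoff_le u v δ hδ0 hδ1 V C hVC pw f hf)

lemma abs_bellman_le (u v : A → Bool → ℝ) (δ : ℝ) (hδ0 : 0 ≤ δ) (hδ1 : δ ≤ 1)
    (hS2 : 2 ≤ Fintype.card S) (V : ℝ × ℝ → ℝ) (C : ℝ) (hVC : ∀ z ∈ Wset u, |V z| ≤ C)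
    (pw : ℝ × ℝ) (hpw : pw ∈ Wset u) :
    |bellman (S := S) u v δ V pw| ≤ (1 - δ) * Kv v + δ * C := by
  rw [bellman_eq_sSup, abs_le]
  obtain ⟨x, hx⟩ := pSet_nonempty (S := S) u v δ hδ0 hδ1 hS2 V pw hpw
  constructor
  · refine le_trans ?_ (le_csSup (pSet_bddAbove u v δ hδ0 hδ1 V C hVC pw) hx)
    obtain ⟨f, hf, rfl⟩ := hx
    exact neg_le_of_abs_le (abs_famPayoff_le u v δ hδ0 hδ1 V C hVC pw f hf)
  · refine csSup_le ⟨x, hx⟩ ?_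
    rintro y ⟨f, hf, rfl⟩
    exact le_trans (le_abs_self _) (abs_famPayoff_le u v δ hδ0 hδ1 V C hVC pw f hf)

/-- one-sided contraction bound for the Bellman operator -/
lemma bellman_contraction (u v : A → Bool → ℝ) (δ : ℝ) (hδ0 : 0 ≤ δ) (hδ1 : δ ≤ 1)
    (hS2 : 2 ≤ Fintype.card S)
    (V₁ V₂ : ℝ × ℝ → ℝ) (C₂ : ℝ) (hV₂ : ∀ z ∈ Wset u, |V₂ z| ≤ C₂)
    (D : ℝ) (hle : ∀ z ∈ Wset u, V₁ z ≤ V₂ z + D)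
    (pw : ℝ × ℝ) (hpw : pw ∈ Wset u) :
    bellman (S := S) u v δ V₁ pw ≤ bellman (S := S) u v δ V₂ pw + δ * D := by
  rw [bellman_eq_sSup, bellman_eq_sSup]
  refine csSup_le (pSet_nonempty (S := S) u v δ hδ0 hδ1 hS2 V₁ pw hpw) ?_
  rintro x ⟨f, hf, rfl⟩
  have h1 : famPayoff v δ V₁ f ≤ famPayoff v δ V₂ f + δ * D := by
    unfold famPayoff
    obtain ⟨hp01, hWm, _, _, _, hT⟩ := hf
    have hterm : ∀ s, f.prob s * ((1 - δ) * euP v (f.act s) (f.belief s)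
        + δ * V₁ (f.belief s, f.promise s))
        ≤ f.prob s * ((1 - δ) * euP v (f.act s) (f.belief s)
        + δ * V₂ (f.belief s, f.promise s)) + f.prob s * (δ * D) := by
      intro s
      have h := hle _ (hWm s)
      have h3 : 0 ≤ f.prob s * δ := mul_nonneg (hp01 s).1 hδ0
      nlinarith [mul_le_mul_of_nonneg_left h h3]
    refine le_trans (Finset.sum_le_sum fun s _ => hterm s) ?_
    rw [Finset.sum_add_distrib, ← Finset.sum_mul, hT, one_mul]
  refine le_trans h1 ?_
  have h2 : famPayoff v δ V₂ f ≤ sSup (pSet (S := S) u v δ V₂ pw) :=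
    le_csSup (pSet_bddAbove u v δ hδ0 hδ1 V₂ C₂ hV₂ pw) ⟨f, hf, rfl⟩
  linarith

end Machinery


section Concavity

variable {A S : Type*} [Fintype A] [Nonempty A] [Fintype S]

lemma mFun_combo (u : A → Bool → ℝ) {θ θ' p p' : ℝ} (hθ : 0 ≤ θ) (hθ' : 0 ≤ θ')
    (hsum : θ + θ' = 1) :
    mFun u (θ * p + θ' * p') ≤ θ * mFun u p + θ' * mFun u p' := by
  obtain ⟨a, ha⟩ := exists_amax u (θ * p + θ' * p')
  have heu : euP u a (θ * p + θ' * p') = θ * euP u a p + θ' * euP u a p' := by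
    have h2 : θ' = 1 - θ := by linarith
    subst h2; unfold euP; ring
  rw [← ha, heu]
  exact add_le_add (mul_le_mul_of_nonneg_left (euP_le_mFun u a p) hθ)
    (mul_le_mul_of_nonneg_left (euP_le_mFun u a p') hθ')

lemma MFun_combo (u : A → Bool → ℝ) {θ θ' p p' : ℝ} (hsum : θ + θ' = 1) :
    MFun u (θ * p + θ' * p') = θ * MFun u p + θ' * MFun u p' := by
  have h2 : θ' = 1 - θ := by linarith
  subst h2; unfold MFun; ring

lemma Wset_convex (u : A → Bool → ℝ) : Convex ℝ (Wset u) := by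
  intro z1 hz1 z2 hz2 θ θ' hθ hθ' hsum
  have h1 : (θ • z1 + θ' • z2).1 = θ * z1.1 + θ' * z2.1 := by
    simp [Prod.smul_fst, Prod.fst_add, smul_eq_mul]
  have h2 : (θ • z1 + θ' • z2).2 = θ * z1.2 + θ' * z2.2 := by
    simp [Prod.smul_snd, Prod.snd_add, smul_eq_mul]
  refine ⟨⟨?_, ?_⟩, ?_, ?_⟩
  · rw [h1]; have := hz1.1.1; have := hz2.1.1; positivity
  · rw [h1]
    have := hz1.1.2; have := hz2.1.2
    nlinarith
  · rw [h1, h2]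
    refine le_trans (mFun_combo u hθ hθ' hsum) ?_
    exact add_le_add (mul_le_mul_of_nonneg_left hz1.2.1 hθ)
      (mul_le_mul_of_nonneg_left hz2.2.1 hθ')
  · rw [h1, h2, MFun_combo u hsum]
    exact add_le_add (mul_le_mul_of_nonneg_left hz1.2.2 hθ)
      (mul_le_mul_of_nonneg_left hz2.2.2 hθ')

lemma sSup_combo {P Q : Set ℝ} (hP : P.Nonempty) (hQ : Q.Nonempty) {θ θ' c : ℝ}
    (hθ : 0 < θ) (hθ' : 0 < θ')
    (h : ∀ x ∈ P, ∀ y ∈ Q, θ * x + θ' * y ≤ c) :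
    θ * sSup P + θ' * sSup Q ≤ c := by
  have step1 : ∀ x ∈ P, sSup Q ≤ (c - θ * x) / θ' := by
    intro x hx
    refine csSup_le hQ fun y hy => ?_
    rw [le_div_iff₀ hθ']
    have := h x hx y hy
    linarith
  have step2 : ∀ x ∈ P, θ * x ≤ c - θ' * sSup Q := by
    intro x hx
    have h1 := mul_le_mul_of_nonneg_left (step1 x hx) hθ'.le
    rw [mul_div_cancel₀ _ (ne_of_gt hθ')] at h1
    linarith
  have step3 : sSup P ≤ (c - θ' * sSup Q) / θ := by
    refine csSup_le hP fun x hx => ?_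
    rw [le_div_iff₀ hθ]
    have := step2 x hx
    linarith
  have h1 := mul_le_mul_of_nonneg_left step3 hθ.le
  rw [mul_div_cancel₀ _ (ne_of_gt hθ)] at h1
  linarith

lemma bellman_concaveOn (u v : A → Bool → ℝ) (δ : ℝ) (hδ0 : 0 ≤ δ) (hδ1 : δ ≤ 1)
    (hS2 : 2 ≤ Fintype.card S) (hAS : Fintype.card A ≤ Fintype.card S)
    (V : ℝ × ℝ → ℝ) (C : ℝ) (hVC : ∀ z ∈ Wset u, |V z| ≤ C)
    (hV : ConcaveOn ℝ (Wset u) V) :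
    ConcaveOn ℝ (Wset u) (bellman (S := S) u v δ V) := by
  refine ⟨Wset_convex u, ?_⟩
  intro z1 hz1 z2 hz2 θ θ' hθ hθ' hsum
  simp only [smul_eq_mul]
  have hzW : θ • z1 + θ' • z2 ∈ Wset u := (Wset_convex u) hz1 hz2 hθ hθ' hsum
  rcases eq_or_lt_of_le hθ with h0 | hθpos
  · have h1 : θ' = 1 := by linarith
    have h2 : θ • z1 + θ' • z2 = z2 := by rw [← h0, h1]; simp
    rw [h2, ← h0, h1]; simp
  rcases eq_or_lt_of_le hθ' with h0' | hθ'pos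
  · have h1 : θ = 1 := by linarith
    have h2 : θ • z1 + θ' • z2 = z1 := by rw [← h0', h1]; simp
    rw [h2, ← h0', h1]; simp
  rw [bellman_eq_sSup, bellman_eq_sSup, bellman_eq_sSup]
  refine sSup_combo (pSet_nonempty (S := S) u v δ hδ0 hδ1 hS2 V z1 hz1)
    (pSet_nonempty (S := S) u v δ hδ0 hδ1 hS2 V z2 hz2) hθpos hθ'pos ?_
  rintro x ⟨f1, hf1, rfl⟩ y ⟨f2, hf2, rfl⟩
  obtain ⟨hp1, hW1, hIC1, hPK1, hB1, hT1⟩ := hf1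
  obtain ⟨hp2, hW2, hIC2, hPK2, hB2, hT2⟩ := hf2
  -- helper for sums over S ⊕ S
  have hsum2 : ∀ G : S ⊕ S → ℝ,
      ∑ i : S ⊕ S, (Sum.elim (fun t => θ * f1.prob t) (fun t => θ' * f2.prob t) i) * G i
        = θ * (∑ t, f1.prob t * G (Sum.inl t)) + θ' * (∑ t, f2.prob t * G (Sum.inr t)) := by
    intro G
    rw [Fintype.sum_sum_type]
    simp only [Sum.elim_inl, Sum.elim_inr]
    rw [Finset.mul_sum, Finset.mul_sum]
    congr 1 <;> exact Finset.sum_congr rfl fun t _ => by ring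
  obtain ⟨h, hhfeas, hpay⟩ := merge_family u v δ hδ0 hδ1 hAS V hV _ hzW
    (Sum.elim (fun t => θ * f1.prob t) (fun t => θ' * f2.prob t))
    (Sum.elim f1.belief f2.belief) (Sum.elim f1.promise f2.promise)
    (Sum.elim f1.act f2.act)
    (by rintro (t | t) <;> simp only [Sum.elim_inl, Sum.elim_inr] <;>
      [exact mul_nonneg hθpos.le (hp1 t).1; exact mul_nonneg hθ'pos.le (hp2 t).1])
    (by rintro (t | t) <;> simp only [Sum.elim_inl, Sum.elim_inr] <;>
      [exact hW1 t; exact hW2 t])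
    (by rintro (t | t) <;> simp only [Sum.elim_inl, Sum.elim_inr] <;>
      [exact hIC1 t; exact hIC2 t])
    (by
      rw [hsum2 (fun i => (1 - δ) * euP u (Sum.elim f1.act f2.act i)
        (Sum.elim f1.belief f2.belief i) + δ * Sum.elim f1.promise f2.promise i)]
      simp only [Sum.elim_inl, Sum.elim_inr, Prod.snd_add, Prod.smul_snd, smul_eq_mul]
      exact add_le_add (mul_le_mul_of_nonneg_left hPK1 hθ)
        (mul_le_mul_of_nonneg_left hPK2 hθ'))
    (by
      rw [hsum2 (Sum.elim f1.belief f2.belief)]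
      simp only [Sum.elim_inl, Sum.elim_inr, Prod.fst_add, Prod.smul_fst, smul_eq_mul]
      rw [hB1, hB2])
    (by
      rw [Fintype.sum_sum_type]
      simp only [Sum.elim_inl, Sum.elim_inr]
      rw [← Finset.mul_sum, ← Finset.mul_sum, hT1, hT2]
      linarith)
  have hle : θ * famPayoff v δ V f1 + θ' * famPayoff v δ V f2 ≤ famPayoff v δ V h := by
    refine le_trans (le_of_eq ?_) hpay
    rw [hsum2 (fun i => (1 - δ) * euP v (Sum.elim f1.act f2.act i)
      (Sum.elim f1.belief f2.belief i)
      + δ * V (Sum.elim f1.belief f2.belief i, Sum.elim f1.promise f2.promise i))]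
    simp only [Sum.elim_inl, Sum.elim_inr]
    rfl
  refine le_trans hle (le_csSup (pSet_bddAbove u v δ hδ0 hδ1 V C hVC _) ⟨h, hhfeas, rfl⟩)

end Concavity


section Iterates

variable {A S : Type*} [Fintype A] [Nonempty A] [Fintype S]

def Vit (u v : A → Bool → ℝ) (δ : ℝ) (S : Type*) [Fintype S] : ℕ → ℝ × ℝ → ℝ
  | 0 => fun _ => 0
  | n + 1 => bellman (S := S) u v δ (Vit u v δ S n)

lemma Vit_bdd (u v : A → Bool → ℝ) (δ : ℝ) (hδ0 : 0 ≤ δ) (hδ1 : δ ≤ 1)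
    (hS2 : 2 ≤ Fintype.card S) :
    ∀ n, ∀ z ∈ Wset u, |Vit u v δ S n z| ≤ Kv v := by
  intro n
  induction n with
  | zero => intro z hz; simp [Vit, Kv_nonneg v]
  | succ n ih =>
    intro z hz
    have := abs_bellman_le (S := S) u v δ hδ0 hδ1 hS2 (Vit u v δ S n) (Kv v) ih z hz
    calc |Vit u v δ S (n+1) z| = |bellman (S := S) u v δ (Vit u v δ S n) z| := rfl
      _ ≤ (1 - δ) * Kv v + δ * Kv v := this
      _ = Kv v := by ring

lemma Vit_concave (u v : A → Bool → ℝ) (δ : ℝ) (hδ0 : 0 ≤ δ) (hδ1 : δ ≤ 1)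
    (hS2 : 2 ≤ Fintype.card S) (hAS : Fintype.card A ≤ Fintype.card S) :
    ∀ n, ConcaveOn ℝ (Wset u) (Vit u v δ S n) := by
  intro n
  induction n with
  | zero => exact concaveOn_const 0 (Wset_convex u)
  | succ n ih =>
    exact bellman_concaveOn u v δ hδ0 hδ1 hS2 hAS (Vit u v δ S n) (Kv v)
      (Vit_bdd u v δ hδ0 hδ1 hS2 n) ih

lemma Vit_approx (u v : A → Bool → ℝ) (δ : ℝ) (hδ0 : 0 ≤ δ) (hδ1 : δ ≤ 1)
    (hS2 : 2 ≤ Fintype.card S)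
    (Vstar : ℝ × ℝ → ℝ) (C : ℝ) (hC0 : 0 ≤ C) (hC : ∀ z ∈ Wset u, |Vstar z| ≤ C)
    (hVfix : ∀ z ∈ Wset u, bellman (S := S) u v δ Vstar z = Vstar z) :
    ∀ n, ∀ z ∈ Wset u, |Vit u v δ S n z - Vstar z| ≤ δ ^ n * (Kv v + C) := by
  intro n
  induction n with
  | zero =>
    intro z hz
    have h1 := hC z hz
    have h2 := Kv_nonneg v
    simp only [Vit, pow_zero, one_mul]
    rw [zero_sub, abs_neg]
    linarith
  | succ n ih =>
    intro z hz
    have hup : bellman (S := S) u v δ (Vit u v δ S n) z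
        ≤ bellman (S := S) u v δ Vstar z + δ * (δ ^ n * (Kv v + C)) := by
      refine bellman_contraction u v δ hδ0 hδ1 hS2 _ Vstar C hC _ ?_ z hz
      intro z' hz'
      have := abs_le.1 (ih z' hz')
      linarith [this.2]
    have hdown : bellman (S := S) u v δ Vstar z
        ≤ bellman (S := S) u v δ (Vit u v δ S n) z + δ * (δ ^ n * (Kv v + C)) := by
      refine bellman_contraction u v δ hδ0 hδ1 hS2 Vstar _ (Kv v)
        (Vit_bdd u v δ hδ0 hδ1 hS2 n) _ ?_ z hz
      intro z' hz'
      have := abs_le.1 (ih z' hz')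
      linarith [this.1]
    have heq : Vit u v δ S (n+1) z = bellman (S := S) u v δ (Vit u v δ S n) z := rfl
    rw [heq, abs_le]
    have hfx := hVfix z hz
    constructor
    · rw [pow_succ]
      nlinarith [hdown]
    · rw [pow_succ]
      nlinarith [hup]

lemma Vstar_concave (u v : A → Bool → ℝ) (δ : ℝ) (hδ0 : 0 ≤ δ) (hδ1 : δ < 1)
    (hS2 : 2 ≤ Fintype.card S) (hAS : Fintype.card A ≤ Fintype.card S)
    (Vstar : ℝ × ℝ → ℝ) (C : ℝ) (hC0 : 0 ≤ C) (hC : ∀ z ∈ Wset u, |Vstar z| ≤ C)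
    (hVfix : ∀ z ∈ Wset u, bellman (S := S) u v δ Vstar z = Vstar z) :
    ConcaveOn ℝ (Wset u) Vstar := by
  refine ⟨Wset_convex u, ?_⟩
  intro z1 hz1 z2 hz2 θ θ' hθ hθ' hsum
  simp only [smul_eq_mul]
  have hzW : θ • z1 + θ' • z2 ∈ Wset u := (Wset_convex u) hz1 hz2 hθ hθ' hsum
  have key : ∀ n, θ * Vstar z1 + θ' * Vstar z2
      ≤ Vstar (θ • z1 + θ' • z2) + 2 * (δ ^ n * (Kv v + C)) := by
    intro n
    have e1 := abs_le.1 (Vit_approx u v δ hδ0 hδ1.le hS2 Vstar C hC0 hC hVfix n z1 hz1)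
    have e2 := abs_le.1 (Vit_approx u v δ hδ0 hδ1.le hS2 Vstar C hC0 hC hVfix n z2 hz2)
    have e3 := abs_le.1 (Vit_approx u v δ hδ0 hδ1.le hS2 Vstar C hC0 hC hVfix n _ hzW)
    have hcon := (Vit_concave u v δ hδ0 hδ1.le hS2 hAS n).2 hz1 hz2 hθ hθ' hsum
    simp only [smul_eq_mul] at hcon
    have f1 : Vstar z1 ≤ Vit u v δ S n z1 + δ ^ n * (Kv v + C) := by linarith [e1.1]
    have f2 : Vstar z2 ≤ Vit u v δ S n z2 + δ ^ n * (Kv v + C) := by linarith [e2.1]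
    have f3 : Vit u v δ S n (θ • z1 + θ' • z2)
        ≤ Vstar (θ • z1 + θ' • z2) + δ ^ n * (Kv v + C) := by linarith [e3.2]
    nlinarith [mul_le_mul_of_nonneg_left f1 hθ, mul_le_mul_of_nonneg_left f2 hθ']
  have htd : Filter.Tendsto (fun n => Vstar (θ • z1 + θ' • z2) + 2 * (δ ^ n * (Kv v + C)))
      Filter.atTop (nhds (Vstar (θ • z1 + θ' • z2) + 2 * (0 * (Kv v + C)))) := by
    exact Filter.Tendsto.const_add _
      (((tendsto_pow_atTop_nhds_zero_of_lt_one hδ0 hδ1).mul_const _).const_mul _)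
  have := ge_of_tendsto' htd key
  simpa using this

end Iterates

/-- at an optimal family, for every signal sent with positive probability,
disclosing no further information within the period is optimal. -/
theorem optimal_family_no_further_disclosure
    {A S : Type*} [Fintype A] [Nonempty A] [Fintype S]
    (u v : A → Bool → ℝ) (δ : ℝ) (astar : A)
    (hδ : δ ∈ Set.Ioo (0 : ℝ) 1)
    (hS2 : 2 ≤ Fintype.card S) (hAS : Fintype.card A ≤ Fintype.card S)
    (hv0 : 0 < v astar false) (hv1 : 0 < v astar true)
    (hvz : ∀ a : A, a ≠ astar → v a false = 0 ∧ v a true = 0)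
    (Vstar : ℝ × ℝ → ℝ) (hVb : BddOnW u Vstar)
    (hVfix : ∀ pw ∈ Wset u, bellman (S := S) u v δ Vstar pw = Vstar pw)
    (pw : ℝ × ℝ) (hpw : pw ∈ Wset u) (f : Fam A S)
    (hfeas : Feasible u δ pw f)
    (hopt : famPayoff v δ Vstar f = bellman (S := S) u v δ Vstar pw) :
    ∀ s : S, 0 < f.prob s →
      (1 - δ) * euP v (f.act s) (f.belief s) + δ * Vstar (f.belief s, f.promise s)
        = Vstar (f.belief s, (1 - δ) * euP u (f.act s) (f.belief s) + δ * f.promise s) := by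
  classical
  obtain ⟨hδ0, hδ1⟩ := hδ
  obtain ⟨C₀, hC₀⟩ := hVb
  set C := max C₀ 0 with hCdef
  have hC : ∀ z ∈ Wset u, |Vstar z| ≤ C := fun z hz => le_trans (hC₀ z hz) (le_max_left _ _)
  have hC0 : (0:ℝ) ≤ C := le_max_right _ _
  have hconc : ConcaveOn ℝ (Wset u) Vstar :=
    Vstar_concave u v δ hδ0.le hδ1 hS2 hAS Vstar C hC0 hC hVfix
  obtain ⟨hp01, hWm, hIC, hPK, hB, hT⟩ := hfeas
  intro s hs
  -- the compounded point is in W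
  have hpsW : (f.belief s, (1 - δ) * euP u (f.act s) (f.belief s) + δ * f.promise s)
      ∈ Wset u := by
    have h1 := hWm s
    refine ⟨h1.1, hIC s, ?_⟩
    have h2 : euP u (f.act s) (f.belief s) ≤ mFun u (f.belief s) := euP_le_mFun u _ _
    have h3 : mFun u (f.belief s) ≤ MFun u (f.belief s) := mFun_le_MFun u h1.1
    have h4 : f.promise s ≤ MFun u (f.belief s) := h1.2.2
    show (1 - δ) * euP u (f.act s) (f.belief s) + δ * f.promise s ≤ MFun u (f.belief s)
    nlinarith [hδ0.le, hδ1.le]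
  -- the trivial (no disclosure) family at the compounded point
  set triv : Fam A S :=
    { prob := fun t => if t = s then 1 else 0
      belief := fun _ => f.belief s
      promise := fun _ => f.promise s
      act := fun _ => f.act s } with htrivdef
  have hsum1 : ∑ t, triv.prob t = 1 := by
    show ∑ t, (if t = s then (1:ℝ) else 0) = 1
    rw [Finset.sum_ite_eq' Finset.univ s (fun _ => (1:ℝ)), if_pos (Finset.mem_univ s)]
  have htriv : Feasible u δ
      (f.belief s, (1 - δ) * euP u (f.act s) (f.belief s) + δ * f.promise s) triv := by
    refine ⟨?_, fun t => hWm s, fun t => hIC s, ?_, ?_, hsum1⟩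
    · intro t
      show (if t = s then (1:ℝ) else 0) ∈ Set.Icc (0:ℝ) 1
      by_cases ht : t = s
      · rw [if_pos ht]; exact ⟨zero_le_one, le_refl 1⟩
      · rw [if_neg ht]; exact ⟨le_refl 0, zero_le_one⟩
    · show ∑ t, triv.prob t * ((1 - δ) * euP u (f.act s) (f.belief s) + δ * f.promise s)
        ≥ (1 - δ) * euP u (f.act s) (f.belief s) + δ * f.promise s
      rw [← Finset.sum_mul, hsum1, one_mul]
    · show ∑ t, triv.prob t * f.belief s = f.belief s
      rw [← Finset.sum_mul, hsum1, one_mul]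
  have hpayt : famPayoff v δ Vstar triv
      = (1 - δ) * euP v (f.act s) (f.belief s) + δ * Vstar (f.belief s, f.promise s) := by
    show ∑ t, triv.prob t * ((1 - δ) * euP v (f.act s) (f.belief s)
      + δ * Vstar (f.belief s, f.promise s)) = _
    rw [← Finset.sum_mul, hsum1, one_mul]
  -- easy direction
  have hle : (1 - δ) * euP v (f.act s) (f.belief s) + δ * Vstar (f.belief s, f.promise s)
      ≤ Vstar (f.belief s, (1 - δ) * euP u (f.act s) (f.belief s) + δ * f.promise s) := by
    rw [← hVfix _ hpsW, bellman_eq_sSup]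
    exact le_csSup (pSet_bddAbove u v δ hδ0.le hδ1.le Vstar C hC _) ⟨triv, htriv, hpayt.symm⟩
  refine le_antisymm hle ?_
  by_contra hlt'
  push_neg at hlt'
  -- a strictly better family at the compounded point
  have hVs : Vstar (f.belief s, (1 - δ) * euP u (f.act s) (f.belief s) + δ * f.promise s)
      = sSup (pSet (S := S) u v δ Vstar
        (f.belief s, (1 - δ) * euP u (f.act s) (f.belief s) + δ * f.promise s)) := by
    rw [← hVfix _ hpsW, bellman_eq_sSup]
  obtain ⟨y, ⟨g, hg, rfl⟩, hy⟩ := exists_lt_of_lt_csSup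
    (pSet_nonempty (S := S) u v δ hδ0.le hδ1.le hS2 Vstar _ hpsW) (by rw [← hVs]; exact hlt')
  obtain ⟨gp, gW, gIC, gPK, gB, gT⟩ := hg
  have gPK' : ∑ t, g.prob t * ((1 - δ) * euP u (g.act t) (g.belief t) + δ * g.promise t)
      ≥ (1 - δ) * euP u (f.act s) (f.belief s) + δ * f.promise s := gPK
  have gB' : ∑ t, g.prob t * g.belief t = f.belief s := gB
  -- sum helpers
  have hsplit1 : ∀ F : S → ℝ, ∑ t, (if t = s then 0 else f.prob t) * F t
      = (∑ t, f.prob t * F t) - f.prob s * F s := by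
    intro F
    have h : ∀ t, (if t = s then 0 else f.prob t) * F t
        = f.prob t * F t - (if t = s then f.prob t * F t else 0) := by
      intro t
      by_cases ht : t = s
      · rw [if_pos ht, if_pos ht]; ring
      · rw [if_neg ht, if_neg ht]; ring
    rw [Finset.sum_congr rfl (fun t _ => h t), Finset.sum_sub_distrib,
      Finset.sum_ite_eq' Finset.univ s (fun t => f.prob t * F t),
      if_pos (Finset.mem_univ s)]
  have hsplit2 : ∀ F : S → ℝ, ∑ t, (f.prob s * g.prob t) * F t
      = f.prob s * ∑ t, g.prob t * F t := by
    intro F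
    rw [Finset.mul_sum]
    exact Finset.sum_congr rfl fun t _ => by ring
  -- the combined generalized family at pw
  obtain ⟨h2, hfeas2, hpay2⟩ := merge_family u v δ hδ0.le hδ1.le hAS Vstar hconc pw hpw
    (Sum.elim (fun t => if t = s then 0 else f.prob t) (fun t => f.prob s * g.prob t))
    (Sum.elim f.belief g.belief) (Sum.elim f.promise g.promise) (Sum.elim f.act g.act)
    (by
      rintro (t | t) <;> simp only [Sum.elim_inl, Sum.elim_inr]
      · by_cases ht : t = s
        · rw [if_pos ht]
        · rw [if_neg ht]; exact (hp01 t).1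
      · exact mul_nonneg (hp01 s).1 (gp t).1)
    (by rintro (t | t) <;> simp only [Sum.elim_inl, Sum.elim_inr] <;>
      [exact hWm t; exact gW t])
    (by rintro (t | t) <;> simp only [Sum.elim_inl, Sum.elim_inr] <;>
      [exact hIC t; exact gIC t])
    (by
      rw [Fintype.sum_sum_type]
      simp only [Sum.elim_inl, Sum.elim_inr]
      rw [hsplit1 (fun t => (1 - δ) * euP u (f.act t) (f.belief t) + δ * f.promise t),
        hsplit2 (fun t => (1 - δ) * euP u (g.act t) (g.belief t) + δ * g.promise t)]
      have hgPK : f.prob s * ((1 - δ) * euP u (f.act s) (f.belief s) + δ * f.promise s)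
          ≤ f.prob s * ∑ t, g.prob t * ((1 - δ) * euP u (g.act t) (g.belief t)
            + δ * g.promise t) :=
        mul_le_mul_of_nonneg_left gPK' (hp01 s).1
      show _ ≥ pw.2
      linarith [hPK])
    (by
      rw [Fintype.sum_sum_type]
      simp only [Sum.elim_inl, Sum.elim_inr]
      rw [hsplit1 f.belief, hsplit2 g.belief, gB', hB]
      show pw.1 - f.prob s * f.belief s + f.prob s * f.belief s = pw.1
      ring)
    (by
      rw [Fintype.sum_sum_type]
      simp only [Sum.elim_inl, Sum.elim_inr]
      have e1 : ∑ t, (if t = s then (0:ℝ) else f.prob t)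
          = (∑ t, f.prob t * 1) - f.prob s * 1 := by
        rw [← hsplit1 (fun _ => (1:ℝ))]
        exact Finset.sum_congr rfl fun t _ => by ring
      have e2 : ∑ t, f.prob s * g.prob t = f.prob s * ∑ t, g.prob t * 1 := by
        rw [← hsplit2 (fun _ => (1:ℝ))]
        exact Finset.sum_congr rfl fun t _ => by ring
      rw [e1, e2]
      have e3 : ∑ t, f.prob t * 1 = 1 := by
        have h5 : ∑ t, f.prob t * 1 = ∑ t, f.prob t := Finset.sum_congr rfl fun t _ => mul_one _
        rw [h5, hT]
      have e4 : ∑ t, g.prob t * 1 = 1 := by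
        have h5 : ∑ t, g.prob t * 1 = ∑ t, g.prob t := Finset.sum_congr rfl fun t _ => mul_one _
        rw [h5, gT]
      rw [e3, e4]; ring)
  -- payoff of the combined family strictly beats f
  have hcomb : ∑ i : S ⊕ S,
      (Sum.elim (fun t => if t = s then 0 else f.prob t) (fun t => f.prob s * g.prob t) i)
      * ((1 - δ) * euP v (Sum.elim f.act g.act i) (Sum.elim f.belief g.belief i)
        + δ * Vstar (Sum.elim f.belief g.belief i, Sum.elim f.promise g.promise i))
      = famPayoff v δ Vstar f
        - f.prob s * ((1 - δ) * euP v (f.act s) (f.belief s)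
            + δ * Vstar (f.belief s, f.promise s))
        + f.prob s * famPayoff v δ Vstar g := by
    rw [Fintype.sum_sum_type]
    simp only [Sum.elim_inl, Sum.elim_inr]
    rw [hsplit1 (fun t => (1 - δ) * euP v (f.act t) (f.belief t)
        + δ * Vstar (f.belief t, f.promise t)),
      hsplit2 (fun t => (1 - δ) * euP v (g.act t) (g.belief t)
        + δ * Vstar (g.belief t, g.promise t))]
    rfl
  have hbig : famPayoff v δ Vstar f < famPayoff v δ Vstar h2 := by
    rw [hcomb] at hpay2
    have hmul : f.prob s * ((1 - δ) * euP v (f.act s) (f.belief s)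
        + δ * Vstar (f.belief s, f.promise s)) < f.prob s * famPayoff v δ Vstar g :=
      mul_lt_mul_of_pos_left hy hs
    linarith
  have hfinal : famPayoff v δ Vstar h2 ≤ famPayoff v δ Vstar f := by
    rw [hopt, bellman_eq_sSup]
    exact le_csSup (pSet_bddAbove u v δ hδ0.le hδ1.le Vstar C hC pw) ⟨h2, hfeas2, rfl⟩
  linarith
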